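/- arXiv:cs/0405085 — 3 statements merged into one kernel-verified Lean document; each statement's English description precedes it below -/
import Mathlib

section
/- (Reduction Lemma, part 2.) Let f be a first-order monotone boolean function of arity k and let A ⊊ B ⊆ {1,…,n}. Then f is invariant under P^n_{A,B} if and only if f is invariant under P^{|A|+1}_{|A|,|A|+1}, the presequentiality relation of arity |A|+1 with first index set {1,…,|A|} and second index set {1,…,|A|+1}. -/
/-- The flat boolean domain: `⊥`, `tt`, `ff`. -/
abbrev Bb : Type := WithBot Bool

/-- The flat (domain) order on `Bb`: `⊥` below everything, `tt` and `ff` incomparable. -/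
def bLE (a b : Bb) : Prop := a = ⊥ ∨ a = b

/-- Pointwise flat order on tuples. -/
def tupLE {k : ℕ} (x y : Fin k → Bb) : Prop := ∀ i, bLE (x i) (y i)

/-- Strict pointwise flat order on tuples. -/
def tupLT {k : ℕ} (x y : Fin k → Bb) : Prop := tupLE x y ∧ x ≠ y

/-- A first-order boolean function is monotone for the flat order. -/
def FlatMono {k : ℕ} (f : (Fin k → Bb) → Bb) : Prop :=
  ∀ x y, tupLE x y → bLE (f x) (f y)

/-- The presequentiality relation `P^n_{A,B}` (indices `0,…,n-1`). -/
def Preseq (n : ℕ) (A B : Finset ℕ) : Set (Fin n → Bb) :=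
  {d | (∃ i : Fin n, (i : ℕ) ∈ A ∧ d i = ⊥) ∨
       (∀ i j : Fin n, (i : ℕ) ∈ B → (j : ℕ) ∈ B → d i = d j)}

/-- `P^n_{m,m'}`: the presequentiality relation on initial segments. -/
def PreseqSeg (n m m' : ℕ) : Set (Fin n → Bb) :=
  Preseq n (Finset.range m) (Finset.range m')

/-- `f` (arity `k`) is invariant under an `n`-ary relation `R`. -/
def Invariant {k n : ℕ} (f : (Fin k → Bb) → Bb) (R : Set (Fin n → Bb)) : Prop :=
  ∀ x : Fin k → Fin n → Bb, (∀ m, x m ∈ R) →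
    (fun i => f (fun m => x m i)) ∈ R

/-- `π₁(tr f)`: the set of minimal points where `f` is defined. -/
def traceDom {k : ℕ} (f : (Fin k → Bb) → Bb) : Set (Fin k → Bb) :=
  {v | f v ≠ ⊥ ∧ ∀ v', tupLT v' v → f v' = ⊥}

/-- Linear coherence of a set of tuples. -/
def LinCoherent {k : ℕ} (S : Set (Fin k → Bb)) : Prop :=
  ∀ j : Fin k, (∀ v ∈ S, v j ≠ ⊥) → ∀ v ∈ S, ∀ w ∈ S, v j = w j

/-- The coefficient of coherence `cc(f) ∈ ℕ∞`. -/
noncomputable def cc {k : ℕ} (f : (Fin k → Bb) → Bb) : ℕ∞ :=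
  sInf {c : ℕ∞ | ∃ S : Finset (Fin k → Bb),
    ↑S ⊆ traceDom f ∧ 2 ≤ S.card ∧ LinCoherent (↑S : Set (Fin k → Bb)) ∧ c = (S.card : ℕ∞)}

/-- The bivalued coefficient of coherence `bcc(f) ∈ ℕ∞`. -/
noncomputable def bcc {k : ℕ} (f : (Fin k → Bb) → Bb) : ℕ∞ :=
  sInf {c : ℕ∞ | ∃ S : Finset (Fin k → Bb),
    ↑S ⊆ traceDom f ∧ 3 ≤ S.card ∧ LinCoherent (↑S : Set (Fin k → Bb)) ∧
    (∃ v ∈ S, f v = ((true : Bool) : Bb)) ∧ (∃ v ∈ S, f v = ((false : Bool) : Bb)) ∧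
    c = (S.card : ℕ∞)}

/-- M-sequentiality, by induction on the arity. -/
def MSeq : ∀ {k : ℕ}, ((Fin k → Bb) → Bb) → Prop
  | 0, f => ∃ b, ∀ x, f x = b
  | (k+1), f => (∃ b, ∀ x, f x = b) ∨
      ∃ i : Fin (k+1), (∀ x, x i = ⊥ → f x = ⊥) ∧
        ∀ c : Bool, MSeq (fun x : Fin k → Bb => f (i.insertNth (c : Bb) x))


/-!
Direction `→` is a pullback: collapsing every index outside `A` onto one extra coordinate turns
`P^n_{A,B}` into the preimage of `P^{|A|+1}_{|A|,|A|+1}`, and invariance is stable under preimages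
along reindexings. Direction `←` needs monotonicity: given columns `i₀, j₀ ∈ B`, feed `f` the rows
restricted to `A` followed by the flat meet of the entries at `i₀` and `j₀`. Unless `f` is already
`⊥` on some `A`-column, invariance forces `f` of the meet column to be defined, and monotonicity
then makes it equal to `f` of both column `i₀` and column `j₀`.
-/

def flatMeet (u v : Bb) : Bb := if u = v then u else ⊥

lemma flatMeet_self (u : Bb) : flatMeet u u = u := if_pos rfl

lemma bLE_flatMeet_left (u v : Bb) : bLE (flatMeet u v) u := by
  unfold flatMeet bLE
  split_ifs <;> simp

lemma bLE_flatMeet_right (u v : Bb) : bLE (flatMeet u v) v := by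
  unfold flatMeet bLE
  split_ifs with h <;> simp [h]

section Invariant

variable {k n n' : ℕ} {f : (Fin k → Bb) → Bb}

lemma Invariant.preimage_comp {R : Set (Fin n → Bb)} (h : Invariant f R) (φ : Fin n → Fin n') :
    Invariant f ((fun d : Fin n' → Bb => d ∘ φ) ⁻¹' R) :=
  fun x hx => h (fun j => x j ∘ φ) hx

lemma preimage_comp_preseq {A B A' B' : Finset ℕ} (φ : Fin n → Fin n')
    (hA : ∀ u : Fin n', (u : ℕ) ∈ A' ↔ ∃ i : Fin n, (i : ℕ) ∈ A ∧ φ i = u)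
    (hB : ∀ u : Fin n', (u : ℕ) ∈ B' ↔ ∃ i : Fin n, (i : ℕ) ∈ B ∧ φ i = u) :
    (fun d : Fin n' → Bb => d ∘ φ) ⁻¹' Preseq n A B = Preseq n' A' B' := by
  ext d
  simp only [Set.mem_preimage, Preseq, Set.mem_ofPred_eq, Function.comp_apply, hA, hB]
  apply or_congr
  · constructor
    · rintro ⟨i, hi, hd⟩
      exact ⟨φ i, ⟨i, hi, rfl⟩, hd⟩
    · rintro ⟨_, ⟨i, hi, rfl⟩, hd⟩
      exact ⟨i, hi, hd⟩
  · constructor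
    · rintro hd _ _ ⟨i, hi, rfl⟩ ⟨j, hj, rfl⟩
      exact hd i j hi hj
    · exact fun hd i j hi hj => hd _ _ ⟨i, hi, rfl⟩ ⟨j, hj, rfl⟩

lemma mem_preseq_iff_of_enum {m : ℕ} {A B : Finset ℕ} (ψ : Fin m → Fin n)
    (hψ : ∀ i : Fin n, (i : ℕ) ∈ A ↔ ∃ a, ψ a = i) (d : Fin n → Bb) :
    d ∈ Preseq n A B ↔
      (∃ a, d (ψ a) = ⊥) ∨ ∀ i j : Fin n, (i : ℕ) ∈ B → (j : ℕ) ∈ B → d i = d j := by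
  simp only [Preseq, Set.mem_ofPred_eq, hψ]
  apply or_congr_left
  constructor
  · rintro ⟨_, ⟨a, rfl⟩, hd⟩
    exact ⟨a, hd⟩
  · rintro ⟨a, hd⟩
    exact ⟨ψ a, ⟨a, rfl⟩, hd⟩

lemma snoc_mem_preseqSeg_iff {m : ℕ} (d : Fin m → Bb) (c : Bb) :
    Fin.snoc (α := fun _ => Bb) d c ∈ PreseqSeg (m + 1) m (m + 1) ↔
      (∃ a, d a = ⊥) ∨ ∀ a, d a = c := by
  simp only [PreseqSeg, Preseq, Set.mem_ofPred_eq, Finset.mem_range, Fin.is_lt, forall_const,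
    Fin.exists_fin_succ', Fin.forall_fin_succ', Fin.val_castSucc, Fin.val_last, lt_irrefl,
    false_and, or_false, Fin.snoc_castSucc, Fin.snoc_last, true_and, and_true]
  refine or_congr_right ⟨fun h a => (h.2 a).symm, fun h => ⟨fun a => ⟨fun b => ?_, h a⟩, ?_⟩⟩
  · rw [h a, h b]
  · exact fun a => (h a).symm

lemma Invariant.apply_snoc {m : ℕ} (h : Invariant f (PreseqSeg (m + 1) m (m + 1)))
    (x : Fin k → Fin m → Bb) (c : Fin k → Bb) (hx : ∀ j, (∃ a, x j a = ⊥) ∨ ∀ a, x j a = c j) :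
    (∃ a, f (fun j => x j a) = ⊥) ∨ ∀ a, f (fun j => x j a) = f c := by
  have hout := h (fun j => Fin.snoc (x j) (c j)) fun j =>
    (snoc_mem_preseqSeg_iff _ _).2 (hx j)
  have hcols : (fun i => f fun j => Fin.snoc (α := fun _ => Bb) (x j) (c j) i) =
      Fin.snoc (α := fun _ => Bb) (fun a => f fun j => x j a) (f c) := by
    funext i
    refine Fin.lastCases ?_ (fun a => ?_) i <;> simp only [Fin.snoc_castSucc, Fin.snoc_last]
  rw [hcols, snoc_mem_preseqSeg_iff] at hout
  exact hout

theorem FlatMono.invariant_preseq {m : ℕ} {A B : Finset ℕ} (hf : FlatMono f)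
    (hinv : Invariant f (PreseqSeg (m + 1) m (m + 1))) (ψ : Fin m → Fin n)
    (hψ : ∀ i : Fin n, (i : ℕ) ∈ A ↔ ∃ a, ψ a = i) (hψB : ∀ a, (ψ a : ℕ) ∈ B) :
    Invariant f (Preseq n A B) := by
  intro y hy
  replace hy := fun j => (mem_preseq_iff_of_enum ψ hψ (y j)).1 (hy j)
  rw [mem_preseq_iff_of_enum ψ hψ]
  refine or_iff_not_imp_left.2 fun hdef i₀ j₀ hi₀ hj₀ => ?_
  cases m with
  | zero =>
    have hcol : (fun j => y j i₀) = fun j => y j j₀ :=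
      funext fun j => (hy j).resolve_left (fun ⟨a, _⟩ => a.elim0) i₀ j₀ hi₀ hj₀
    exact congrArg f hcol
  | succ m =>
    let meet : Fin k → Bb := fun j => flatMeet (y j i₀) (y j j₀)
    have hx : ∀ j, (∃ a, y j (ψ a) = ⊥) ∨ ∀ a, y j (ψ a) = meet j := by
      refine fun j => (hy j).imp id fun hconst a => ?_
      simp only [meet, hconst i₀ j₀ hi₀ hj₀, flatMeet_self]
      exact hconst _ _ (hψB a) hj₀
    rcases hinv.apply_snoc (fun j a => y j (ψ a)) meet hx with ⟨a, ha⟩ | hconst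
    · exact absurd ⟨a, ha⟩ hdef
    · have hmeet : f meet ≠ ⊥ := fun h => hdef ⟨0, (hconst 0).trans h⟩
      calc f (fun j => y j i₀) = f meet :=
            ((hf _ _ fun j => bLE_flatMeet_left _ _).resolve_left hmeet).symm
        _ = f (fun j => y j j₀) :=
            (hf _ _ fun j => bLE_flatMeet_right _ _).resolve_left hmeet

end Invariant

section Collapse

variable {n : ℕ} {A : Finset ℕ} (hA : ∀ i ∈ A, i < n)

noncomputable def finSubtypeEquiv : {i : Fin n // (i : ℕ) ∈ A} ≃ Fin A.card :=
  (Equiv.mk (fun i => ⟨i.1, i.2⟩) (fun x => ⟨⟨x.1, hA x.1 x.2⟩, x.2⟩) (fun _ => rfl)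
    (fun _ => rfl)).trans A.equivFin

noncomputable def collapse (i : Fin n) : Fin (A.card + 1) :=
  if h : (i : ℕ) ∈ A then (finSubtypeEquiv hA ⟨i, h⟩).castSucc else Fin.last _

lemma collapse_symm (a : Fin A.card) :
    collapse hA ((finSubtypeEquiv hA).symm a) = a.castSucc := by
  simp [collapse, ((finSubtypeEquiv hA).symm a).2]

lemma exists_collapse_eq_iff_lt (u : Fin (A.card + 1)) :
    (∃ i : Fin n, (i : ℕ) ∈ A ∧ collapse hA i = u) ↔ (u : ℕ) < A.card := by
  constructor
  · rintro ⟨i, hi, rfl⟩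
    simp [collapse, hi]
  · intro hu
    refine ⟨_, ((finSubtypeEquiv hA).symm ⟨u, hu⟩).2, ?_⟩
    rw [collapse_symm]
    rfl

lemma exists_collapse_eq_of_ssubset {B : Finset ℕ} (hAB : A ⊂ B) (hB : ∀ i ∈ B, i < n)
    (u : Fin (A.card + 1)) : ∃ i : Fin n, (i : ℕ) ∈ B ∧ collapse hA i = u := by
  by_cases hu : (u : ℕ) < A.card
  · obtain ⟨i, hi, hiu⟩ := (exists_collapse_eq_iff_lt hA u).2 hu
    exact ⟨i, hAB.subset hi, hiu⟩
  · obtain ⟨b, hbB, hbA⟩ := Finset.exists_of_ssubset hAB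
    refine ⟨⟨b, hB b hbB⟩, hbB, ?_⟩
    rw [collapse, dif_neg hbA]
    ext
    simp only [Fin.val_last]
    omega

lemma mem_iff_exists_finSubtypeEquiv_symm (i : Fin n) :
    (i : ℕ) ∈ A ↔ ∃ a, ((finSubtypeEquiv hA).symm a : Fin n) = i :=
  ⟨fun h => ⟨finSubtypeEquiv hA ⟨i, h⟩, by simp⟩,
    fun ⟨a, ha⟩ => ha ▸ ((finSubtypeEquiv hA).symm a).2⟩

end Collapse

/-- Reduction Lemma, part 2: for `A ⊊ B`, invariance under `P^n_{A,B}`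
is equivalent to invariance under `P^{|A|+1}_{|A|,|A|+1}`. -/
theorem stmt_6 {k n : ℕ} (f : (Fin k → Bb) → Bb) (hf : FlatMono f)
    (A B : Finset ℕ) (hAB : A ⊂ B) (hBn : ∀ i ∈ B, i < n) :
    Invariant f (Preseq n A B) ↔
      Invariant f (PreseqSeg (A.card + 1) A.card (A.card + 1)) := by
  have hAn : ∀ i ∈ A, i < n := fun i hi => hBn i (hAB.subset hi)
  constructor
  · intro h
    have hcollapseA (u : Fin (A.card + 1)) :
        (u : ℕ) ∈ Finset.range A.card ↔ ∃ i : Fin n, (i : ℕ) ∈ A ∧ collapse hAn i = u := by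
      rw [Finset.mem_range, exists_collapse_eq_iff_lt]
    have hcollapseB (u : Fin (A.card + 1)) :
        (u : ℕ) ∈ Finset.range (A.card + 1) ↔ ∃ i : Fin n, (i : ℕ) ∈ B ∧ collapse hAn i = u :=
      iff_of_true (Finset.mem_range.2 u.is_lt) (exists_collapse_eq_of_ssubset hAn hAB hBn u)
    rw [PreseqSeg, ← preimage_comp_preseq (collapse hAn) hcollapseA hcollapseB]
    exact h.preimage_comp _
  · intro h
    exact hf.invariant_preseq h _ (mem_iff_exists_finSubtypeEquiv_symm hAn)
      fun a => hAB.subset ((finSubtypeEquiv hAn).symm a).2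
end

section
/- Let f be a first-order monotone boolean function of arity k and suppose bcc(f) = b is finite (so π₁(tr f) has a bivalued linearly coherent subset of cardinality ≥ 3, and b is the minimum such cardinality). Then f is invariant under P^{b−1}_{b−1,b−1} but f is not invariant under P^b_{b,b}. -/
/-!
A point on which `f` is defined lies above a trace point with the same value. Hence, if the
columns of a matrix whose rows lie in `P^n_{n,n}` have defined but distinct images, the trace
points below them form a linearly coherent set on which `f` takes distinct values; monotonicity
forces such a set to have at least three elements (two coherent points have a common upper
bound), so it is bivalued and its size, at most `n`, is at least `bcc f`. Conversely, the
columns enumerating a bivalued coherent set `S` have rows in `P^{|S|}_{|S|,|S|}`, while their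
images are defined and not all equal.
-/

lemma bLE_trans {a b c : Bb} (hab : bLE a b) (hbc : bLE b c) : bLE a c := by
  rcases hab with h | rfl
  · exact Or.inl h
  · exact hbc

lemma bLE_eq_of_ne_bot {a b : Bb} (h : bLE a b) (ha : a ≠ ⊥) : a = b :=
  h.resolve_left ha

lemma tupLE_refl {k : ℕ} (v : Fin k → Bb) : tupLE v v := fun _ => Or.inr rfl

lemma tupLE_trans {k : ℕ} {u v w : Fin k → Bb} (huv : tupLE u v) (hvw : tupLE v w) :
    tupLE u w :=
  fun j => bLE_trans (huv j) (hvw j)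

def defSupport {k : ℕ} (v : Fin k → Bb) : Finset (Fin k) := {j | v j ≠ ⊥}

lemma tupLT.card_defSupport_lt {k : ℕ} {u v : Fin k → Bb} (h : tupLT u v) :
    (defSupport u).card < (defSupport v).card := by
  obtain ⟨hle, hne⟩ := h
  obtain ⟨j, hj⟩ := Function.ne_iff.1 hne
  have huj : u j = ⊥ := (hle j).resolve_right hj
  apply Finset.card_lt_card
  refine (Finset.ssubset_iff_of_subset fun i hi => ?_).2 ⟨j, ?_, ?_⟩
  · simp only [defSupport, Finset.mem_filter, Finset.mem_univ, true_and] at hi ⊢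
    exact bLE_eq_of_ne_bot (hle i) hi ▸ hi
  · simpa [defSupport, huj] using fun h => hj (huj.trans h.symm)
  · simp [defSupport, huj]

lemma exists_traceDom_le {k : ℕ} {f : (Fin k → Bb) → Bb} (hf : FlatMono f)
    (c : Fin k → Bb) (hc : f c ≠ ⊥) :
    ∃ w ∈ traceDom f, tupLE w c ∧ f w = f c := by
  obtain ⟨w, ⟨hwc, hw⟩, hmin⟩ := (measure fun v : Fin k → Bb => (defSupport v).card).wf.has_min
    {v | tupLE v c ∧ f v ≠ ⊥} ⟨c, tupLE_refl c, hc⟩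
  refine ⟨w, ⟨hw, fun u hu => ?_⟩, hwc, bLE_eq_of_ne_bot (hf w c hwc) hw⟩
  by_contra hu'
  exact hmin u ⟨tupLE_trans hu.1 hwc, hu'⟩ hu.card_defSupport_lt

lemma FlatMono.eq_of_compatible {k : ℕ} {f : (Fin k → Bb) → Bb} (hf : FlatMono f)
    {v w : Fin k → Bb} (hvw : ∀ j, v j ≠ ⊥ → w j ≠ ⊥ → v j = w j)
    (hv : f v ≠ ⊥) (hw : f w ≠ ⊥) : f v = f w := by
  let z : Fin k → Bb := fun j => if v j = ⊥ then w j else v j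
  have hvz : tupLE v z := fun j => by by_cases h : v j = ⊥ <;> simp [z, bLE, h]
  have hwz : tupLE w z := fun j => by
    by_cases h : w j = ⊥
    · exact Or.inl h
    · by_cases h' : v j = ⊥
      · simp [z, bLE, h']
      · simp [z, bLE, hvw j h' h]
  rw [bLE_eq_of_ne_bot (hf v z hvz) hv, bLE_eq_of_ne_bot (hf w z hwz) hw]

lemma mem_preseqSeg_self_iff {n : ℕ} {d : Fin n → Bb} :
    d ∈ PreseqSeg n n n ↔ (∃ i, d i = ⊥) ∨ ∀ i j, d i = d j := by
  simp [PreseqSeg, Preseq]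

lemma mem_preseqSeg_of_tupLE {n : ℕ} {d e : Fin n → Bb} (hde : tupLE d e)
    (he : e ∈ PreseqSeg n n n) : d ∈ PreseqSeg n n n := by
  rw [mem_preseqSeg_self_iff] at he ⊢
  by_cases hd : ∃ i, d i = ⊥
  · exact Or.inl hd
  · simp only [not_exists] at hd
    have hde' : d = e := funext fun i => bLE_eq_of_ne_bot (hde i) (hd i)
    subst hde'
    exact he

lemma linCoherent_range_iff {k n : ℕ} {g : Fin n → Fin k → Bb} :
    LinCoherent (Set.range g) ↔ ∀ m, (fun i => g i m) ∈ PreseqSeg n n n := by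
  simp only [LinCoherent, Set.forall_mem_range, mem_preseqSeg_self_iff]
  refine forall_congr' fun m => ?_
  by_cases h : ∃ i, g i m = ⊥
  · simp [h]
  · simp only [not_exists] at h
    simp [h]

structure IsBivaluedCoherent {k : ℕ} (f : (Fin k → Bb) → Bb) (S : Finset (Fin k → Bb)) :
    Prop where
  subset_traceDom : ↑S ⊆ traceDom f
  three_le_card : 3 ≤ S.card
  linCoherent : LinCoherent (↑S : Set (Fin k → Bb))
  exists_true : ∃ v ∈ S, f v = ((true : Bool) : Bb)
  exists_false : ∃ v ∈ S, f v = ((false : Bool) : Bb)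

lemma bcc_le_card {k : ℕ} {f : (Fin k → Bb) → Bb} {S : Finset (Fin k → Bb)}
    (hS : IsBivaluedCoherent f S) : bcc f ≤ S.card :=
  sInf_le ⟨S, hS.subset_traceDom, hS.three_le_card, hS.linCoherent, hS.exists_true,
    hS.exists_false, rfl⟩

lemma ENat.coe_mem_of_sInf_eq {s : Set ℕ∞} {b : ℕ} (h : sInf s = b) : (b : ℕ∞) ∈ s := by
  refine h ▸ csInf_mem (Set.nonempty_iff_ne_empty.2 fun hs => ?_)
  rw [hs, sInf_empty] at h
  exact ENat.top_ne_natCast b h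

lemma exists_isBivaluedCoherent_of_bcc_eq {k : ℕ} {f : (Fin k → Bb) → Bb} {b : ℕ}
    (hb : bcc f = b) : ∃ S, IsBivaluedCoherent f S ∧ S.card = b := by
  obtain ⟨S, h₁, h₂, h₃, h₄, h₅, hcard⟩ := ENat.coe_mem_of_sInf_eq hb
  exact ⟨S, ⟨h₁, h₂, h₃, h₄, h₅⟩, by exact_mod_cast hcard.symm⟩

lemma isBivaluedCoherent_of_ne {k : ℕ} {f : (Fin k → Bb) → Bb} (hf : FlatMono f)
    {S : Finset (Fin k → Bb)} (hS : ↑S ⊆ traceDom f) (hcoh : LinCoherent (↑S : Set (Fin k → Bb)))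
    {v w : Fin k → Bb} (hv : v ∈ S) (hw : w ∈ S) (hvw : f v ≠ f w) :
    IsBivaluedCoherent f S := by
  have hfv : f v ≠ ⊥ := (hS hv).1
  have hfw : f w ≠ ⊥ := (hS hw).1
  have hcard : 3 ≤ S.card := by
    by_contra! hlt
    have hne : v ≠ w := by rintro rfl; exact hvw rfl
    have hpair : {v, w} = S := Finset.eq_of_subset_of_card_le
      (Finset.insert_subset hv (Finset.singleton_subset_iff.2 hw))
      (by rw [Finset.card_pair hne]; omega)
    refine hvw (hf.eq_of_compatible (fun j hvj hwj => hcoh j ?_ v hv w hw) hfv hfw)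
    rw [← hpair]
    simp [hvj, hwj]
  obtain ⟨a, ha⟩ := WithBot.ne_bot_iff_exists.1 hfv
  obtain ⟨c, hc⟩ := WithBot.ne_bot_iff_exists.1 hfw
  refine ⟨hS, hcard, hcoh, ?_, ?_⟩ <;>
    cases a <;> cases c <;> first
      | exact absurd (ha.symm.trans hc) hvw
      | exact ⟨v, hv, ha.symm⟩
      | exact ⟨w, hw, hc.symm⟩

theorem invariant_preseqSeg_of_lt_bcc {k : ℕ} {f : (Fin k → Bb) → Bb} (hf : FlatMono f)
    {n : ℕ} (hn : (n : ℕ∞) < bcc f) : Invariant f (PreseqSeg n n n) := by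
  intro x hx
  rw [mem_preseqSeg_self_iff]
  by_contra! hcol
  obtain ⟨hdef, i, j, hij⟩ := hcol
  choose w hw hwle hfw using fun i => exists_traceDom_le hf _ (hdef i)
  have hrange : (↑(Finset.univ.image w) : Set (Fin k → Bb)) = Set.range w := by simp
  have hcoh : LinCoherent (Set.range w) :=
    linCoherent_range_iff.2 fun m => mem_preseqSeg_of_tupLE (fun i => hwle i m) (hx m)
  have hbiv : IsBivaluedCoherent f (Finset.univ.image w) :=
    isBivaluedCoherent_of_ne hf (hrange ▸ Set.range_subset_iff.2 hw) (hrange ▸ hcoh)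
      (Finset.mem_image_of_mem w (Finset.mem_univ i))
      (Finset.mem_image_of_mem w (Finset.mem_univ j)) (by rwa [hfw, hfw])
  have hcard : (Finset.univ.image w).card ≤ n :=
    Finset.card_image_le.trans (by simp)
  exact (bcc_le_card hbiv).not_gt (hn.trans_le' (by exact_mod_cast hcard))

theorem not_invariant_preseqSeg_card {k : ℕ} {f : (Fin k → Bb) → Bb}
    {S : Finset (Fin k → Bb)} (hS : IsBivaluedCoherent f S) :
    ¬ Invariant f (PreseqSeg S.card S.card S.card) := by
  intro hinv
  let g : Fin S.card → Fin k → Bb := fun i => S.equivFin.symm i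
  have hg : Set.range g = ↑S := by
    ext v
    refine ⟨by rintro ⟨i, rfl⟩; exact (S.equivFin.symm i).2, fun hv => ⟨S.equivFin ⟨v, hv⟩, ?_⟩⟩
    simp [g]
  have himage := hinv (fun m i => g i m) (linCoherent_range_iff.1 (hg ▸ hS.linCoherent))
  rw [mem_preseqSeg_self_iff] at himage
  rcases himage with ⟨i, hi⟩ | hconst
  · exact (hS.subset_traceDom (hg ▸ Set.mem_range_self i)).1 hi
  · obtain ⟨v, hv, hfv⟩ := hS.exists_true
    obtain ⟨w, hw, hfw⟩ := hS.exists_false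
    obtain ⟨i, rfl⟩ : v ∈ Set.range g := hg ▸ hv
    obtain ⟨j, rfl⟩ : w ∈ Set.range g := hg ▸ hw
    simpa [hfv, hfw] using hconst i j

/-- if `bcc f = b` is finite, then `f` is invariant under
`P^{b-1}_{b-1,b-1}` but not under `P^b_{b,b}`. -/
theorem stmt_11 {k : ℕ} (f : (Fin k → Bb) → Bb) (hf : FlatMono f)
    (b : ℕ) (hb : bcc f = (b : ℕ∞)) :
    Invariant f (PreseqSeg (b - 1) (b - 1) (b - 1)) ∧
    ¬ Invariant f (PreseqSeg b b b) := by
  obtain ⟨S, hS, rfl⟩ := exists_isBivaluedCoherent_of_bcc_eq hb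
  have hlt : ((S.card - 1 : ℕ) : ℕ∞) < bcc f := by
    rw [hb]
    exact_mod_cast Nat.sub_lt (by have := hS.three_le_card; omega) one_pos
  exact ⟨invariant_preseqSeg_of_lt_bcc hf hlt, not_invariant_preseqSeg_card hS⟩
end

section
/- A first-order monotone boolean function f of arity k is invariant under every presequentiality relation P^n_{A,B} (for all n ≥ 1 and all A ⊆ B ⊆ {1,…,n}) if and only if f is M-sequential. -/
/-!
An M-sequential `f` preserves `P_{A,B}`: if the row of its index of sequentiality `i` has a `⊥`
in `A`, so has the output; otherwise that row is constant on `B`, either `⊥` (so the output is `⊥`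
on `B`) or some `c`, and on `B` the output is that of the restriction `f_c`, which preserves
`P_{A,B}` by induction.

Conversely, constant tuples lie in every `P_{A,B}`, so invariance passes to the restrictions, and
a nonconstant invariant `f` of arity `k` has an index of sequentiality: otherwise pick `w_j` with
`w_j j = ⊥` and `f w_j ≠ ⊥`, and `z` with `f z ≠ f w_0`. The rows of the matrix with columns
`w_0, …, w_{k-1}, z` lie in `P^{k+1}_{[0,k),[0,k]}`, but the row of values of `f` does not.
-/

open Finset

def PreseqInvariant {k : ℕ} (f : (Fin k → Bb) → Bb) : Prop :=
  ∀ n : ℕ, 1 ≤ n → ∀ A B : Finset ℕ, A ⊆ B → (∀ i ∈ B, i < n) → Invariant f (Preseq n A B)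

section Preseq

variable {n : ℕ} {A B : Finset ℕ}

lemma const_mem_preseq (v : Bb) : (fun _ => v) ∈ Preseq n A B :=
  Or.inr fun _ _ _ _ => rfl

lemma mem_preseq_of_eqOn {d d' : Fin n → Bb} (hAB : A ⊆ B) (hd : d ∈ Preseq n A B)
    (h : ∀ j : Fin n, (j : ℕ) ∈ B → d j = d' j) : d' ∈ Preseq n A B := by
  rcases hd with ⟨j, hjA, hj⟩ | hd
  · exact Or.inl ⟨j, hjA, h j (hAB hjA) ▸ hj⟩
  · exact Or.inr fun a b ha hb => by rw [← h a ha, ← h b hb]; exact hd a b ha hb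

lemma exists_eq_of_forall_eq {d : Fin n → Bb}
    (h : ∀ i j : Fin n, (i : ℕ) ∈ B → (j : ℕ) ∈ B → d i = d j) :
    ∃ v, ∀ j : Fin n, (j : ℕ) ∈ B → d j = v := by
  by_cases hB : ∃ j₀ : Fin n, (j₀ : ℕ) ∈ B
  · obtain ⟨j₀, hj₀⟩ := hB
    exact ⟨d j₀, fun j hj => h j j₀ hj hj₀⟩
  · exact ⟨⊥, fun j hj => absurd ⟨j, hj⟩ hB⟩

lemma invariant_preseq_of_forall_eq {k : ℕ} {f : (Fin k → Bb) → Bb} {b : Bb}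
    (hf : ∀ x, f x = b) : Invariant f (Preseq n A B) :=
  fun _ _ => Or.inr fun _ _ _ _ => by simp only [hf]

end Preseq

lemma Invariant.insertNth {k n : ℕ} {f : (Fin (k + 1) → Bb) → Bb} {R : Set (Fin n → Bb)}
    (h : Invariant f R) (i : Fin (k + 1)) {c : Bb} (hc : (fun _ => c) ∈ R) :
    Invariant (fun x => f (i.insertNth c x)) R := by
  intro x hx
  refine h (fun m j => (i.insertNth c fun m' => x m' j : Fin (k + 1) → Bb) m)
    (Fin.succAboveCases i ?_ fun m => ?_)
  · simpa only [Fin.insertNth_apply_same] using hc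
  · simpa only [Fin.insertNth_apply_succAbove] using hx m

lemma PreseqInvariant.insertNth {k : ℕ} {f : (Fin (k + 1) → Bb) → Bb} (h : PreseqInvariant f)
    (i : Fin (k + 1)) (c : Bb) : PreseqInvariant fun x => f (i.insertNth c x) :=
  fun n hn A B hAB hB => (h n hn A B hAB hB).insertNth i (const_mem_preseq c)

lemma MSeq.invariant_preseq : ∀ {k : ℕ} {f : (Fin k → Bb) → Bb}, MSeq f →
    ∀ {n : ℕ} {A B : Finset ℕ}, A ⊆ B → Invariant f (Preseq n A B)
  | 0, _, ⟨_, hb⟩, _, _, _, _ => invariant_preseq_of_forall_eq hb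
  | _ + 1, _, .inl ⟨_, hb⟩, _, _, _, _ => invariant_preseq_of_forall_eq hb
  | _ + 1, f, .inr ⟨i, hbot, hrec⟩, n, A, B, hAB => by
    intro x hx
    rcases hx i with ⟨j, hjA, hj⟩ | hrow
    · exact Or.inl ⟨j, hjA, hbot _ hj⟩
    obtain ⟨v, hv⟩ := exists_eq_of_forall_eq hrow
    induction v using WithBot.recBotCoe with
    | bot =>
      exact Or.inr fun a b ha hb => (hbot _ (hv a ha)).trans (hbot _ (hv b hb)).symm
    | coe c =>
      refine mem_preseq_of_eqOn hAB
        ((hrec c).invariant_preseq hAB (fun m => x (i.succAbove m)) fun m => hx _) fun j hj => ?_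
      rw [← Fin.insertNth_self_removeNth i (fun m => x m j), hv j hj]
      rfl

lemma exists_index_of_sequentiality {k : ℕ} {f : (Fin (k + 1) → Bb) → Bb}
    (h : Invariant f (Preseq (k + 2) (range (k + 1)) (range (k + 2))))
    (hf : ∀ b, ∃ x, f x ≠ b) : ∃ i, ∀ x, x i = ⊥ → f x = ⊥ := by
  by_contra! hno
  choose w hw_bot hw_def using hno
  obtain ⟨z, hz⟩ := hf (f (w 0))
  let X : Fin (k + 1) → Fin (k + 2) → Bb := fun m => Fin.snoc (fun j => w j m) (z m)
  have hX : ∀ m, X m ∈ Preseq (k + 2) (range (k + 1)) (range (k + 2)) := fun m =>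
    Or.inl ⟨m.castSucc, by simpa using m.isLt, by simp [X, hw_bot]⟩
  rcases h X hX with ⟨j, hjA, hj⟩ | hconst
  · induction j using Fin.lastCases with
    | last => simp at hjA
    | cast j => exact hw_def j (by simpa [X] using hj)
  · exact hz (by simpa [X] using (hconst (Fin.castSucc 0) (Fin.last _) (by simp) (by simp)).symm)

theorem MSeq.of_preseqInvariant : ∀ {k : ℕ} {f : (Fin k → Bb) → Bb}, PreseqInvariant f → MSeq f
  | 0, f, _ => ⟨f Fin.elim0, fun x => congrArg f (Subsingleton.elim _ _)⟩
  | k + 1, f, h => by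
    by_cases hc : ∃ b, ∀ x, f x = b
    · exact Or.inl hc
    push Not at hc
    obtain ⟨i, hi⟩ := exists_index_of_sequentiality
      (h (k + 2) (by omega) _ _ (range_subset_range.2 (by omega)) fun _ => mem_range.1) hc
    exact Or.inr ⟨i, hi, fun c => of_preseqInvariant (h.insertNth i c)⟩

theorem stmt_14_general {k : ℕ} (f : (Fin k → Bb) → Bb) :
    (∀ n : ℕ, 1 ≤ n → ∀ A B : Finset ℕ, A ⊆ B → (∀ i ∈ B, i < n) →
      Invariant f (Preseq n A B)) ↔ MSeq f :=
  ⟨MSeq.of_preseqInvariant, fun h _ _ _ _ hAB _ => h.invariant_preseq hAB⟩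

/-- `f` is invariant under every presequentiality relation iff `f` is
M-sequential. -/
theorem stmt_14 {k : ℕ} (f : (Fin k → Bb) → Bb) (hf : FlatMono f) :
    (∀ n : ℕ, 1 ≤ n → ∀ A B : Finset ℕ, A ⊆ B → (∀ i ∈ B, i < n) →
      Invariant f (Preseq n A B)) ↔ MSeq f :=
  stmt_14_general f
end
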